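/- arXiv:2310.05540 — 2 statements merged into one kernel-verified Lean document; each statement's English description precedes it below -/
import Mathlib

section
/- Let p be an odd prime and q = p^2. For k ≥ 0, σ**(x^{2k+1}) splits over F_q (is a product of linear factors) if and only if 2k+1 = N·p^n − 1 for some divisor N of p^2 − 1 and some n ∈ ℕ. -/
open Polynomial

variable {F : Type*} [Field F]

/-- `D` is a (monic) unitary divisor of `S`: `D ∣ S` and `gcd(D, S/D) = 1`. -/
def IsUnitaryDivisor (D S : Polynomial F) : Prop :=
  D.Monic ∧ D ∣ S ∧ IsCoprime D (S / D)

/-- `D` is a (monic) bi-unitary divisor of `S`: `gcd_u(D, S/D) = 1`, i.e. the only common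
monic unitary divisor of `D` and `S/D` is `1`. -/
def IsBiunitaryDivisor (D S : Polynomial F) : Prop :=
  D.Monic ∧ D ∣ S ∧
    ∀ G : Polynomial F, IsUnitaryDivisor G D → IsUnitaryDivisor G (S / D) → G = 1

/-- `σ(S)`: the sum of all monic divisors of `S`. -/
noncomputable def sigma' (S : Polynomial F) : Polynomial F :=
  ∑ᶠ D ∈ {D : Polynomial F | D.Monic ∧ D ∣ S}, D

/-- `σ**(S)`: the sum of all monic bi-unitary divisors of `S`. -/
noncomputable def sigmaStarStar (S : Polynomial F) : Polynomial F :=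
  ∑ᶠ D ∈ {D : Polynomial F | IsBiunitaryDivisor D S}, D

/-- `S` is bi-unitary perfect: `σ**(S) = S`. -/
def IsBUP (S : Polynomial F) : Prop := sigmaStarStar S = S

/-!
The monic divisors of `X^m` are the powers `X^a` with `a ≤ m`, and the only unitary divisors of
`X^a` are `1` and `X^a`. For odd `m` the exponents `a` and `m - a` never coincide, so every `X^a`
is a bi-unitary divisor and `σ**(X^m) = 1 + X + ⋯ + X^m`, which splits iff `X^(m+1) - 1` does.
Writing `m + 1 = N p^n` with `p ∤ N`, in characteristic `p` we have
`X^(m+1) - 1 = (X^N - 1)^(p^n)`, and the separable polynomial `X^N - 1` splits over a finite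
field `F` iff `F` contains a primitive `N`-th root of unity, i.e. iff `N ∣ |F| - 1`.
-/

lemma monic_and_dvd_X_pow_iff {D : F[X]} {m : ℕ} :
    D.Monic ∧ D ∣ X ^ m ↔ ∃ a ≤ m, D = X ^ a := by
  constructor
  · rintro ⟨hD, h⟩
    obtain ⟨a, ham, hassoc⟩ := (dvd_prime_pow prime_X m).mp h
    exact ⟨a, ham, eq_of_monic_of_associated hD (monic_X_pow a) hassoc⟩
  · rintro ⟨a, ham, rfl⟩
    exact ⟨monic_X_pow a, pow_dvd_pow X ham⟩

lemma X_pow_div_X_pow {a b : ℕ} (h : b ≤ a) : (X ^ a : F[X]) / X ^ b = X ^ (a - b) := by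
  rw [← pow_sub_mul_pow (X : F[X]) h,
    mul_div_cancel_right₀ _ (pow_ne_zero b (X_ne_zero (R := F)))]

lemma IsUnitaryDivisor.eq_one_or_eq_X_pow {G : F[X]} {a : ℕ} (h : IsUnitaryDivisor G (X ^ a)) :
    G = 1 ∨ G = X ^ a := by
  obtain ⟨hG, hdvd, hcop⟩ := h
  obtain ⟨b, hba, rfl⟩ := monic_and_dvd_X_pow_iff.mp ⟨hG, hdvd⟩
  rw [X_pow_div_X_pow hba] at hcop
  rcases Nat.eq_zero_or_pos b with rfl | hb
  · exact .inl (pow_zero X)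
  rcases hba.eq_or_lt with rfl | hlt
  · exact .inr rfl
  exact absurd (hcop.isUnit_of_dvd' (dvd_pow_self X hb.ne')
    (dvd_pow_self X (Nat.sub_ne_zero_of_lt hlt))) not_isUnit_X

lemma isBiunitaryDivisor_X_pow_iff {D : F[X]} {m : ℕ} (hm : Odd m) :
    IsBiunitaryDivisor D (X ^ m) ↔ ∃ a ≤ m, D = X ^ a := by
  refine ⟨fun h => monic_and_dvd_X_pow_iff.mp ⟨h.1, h.2.1⟩, ?_⟩
  rintro ⟨a, ham, rfl⟩
  refine ⟨monic_X_pow a, pow_dvd_pow X ham, fun G hG hG' => ?_⟩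
  rw [X_pow_div_X_pow ham] at hG'
  rcases hG.eq_one_or_eq_X_pow with h | rfl
  · exact h
  refine hG'.eq_one_or_eq_X_pow.resolve_right fun h => ?_
  have : a = m - a := pow_injective_of_not_isUnit not_isUnit_X X_ne_zero h
  exact Nat.not_even_iff_odd.mpr hm ⟨a, by omega⟩

lemma sigmaStarStar_X_pow_of_odd {m : ℕ} (hm : Odd m) :
    sigmaStarStar (X ^ m : F[X]) = ∑ a ∈ Finset.range (m + 1), X ^ a := by
  have hset : {D : F[X] | IsBiunitaryDivisor D (X ^ m)} =
      (X ^ ·) '' ↑(Finset.range (m + 1)) := by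
    ext D
    simp [isBiunitaryDivisor_X_pow_iff hm, eq_comm]
  rw [sigmaStarStar, hset, finsum_mem_image
    (pow_injective_of_not_isUnit not_isUnit_X X_ne_zero).injOn, finsum_mem_coe_finset]

lemma splits_geom_sum_X_iff (n : ℕ) :
    (∑ a ∈ Finset.range n, (X : F[X]) ^ a).Splits ↔ (X ^ n - 1 : F[X]).Splits := by
  rw [← geom_sum_mul, ← C_1, splits_mul_iff_left (X_sub_C_ne_zero 1) (Splits.X_sub_C 1)]

lemma exists_isPrimitiveRoot_of_splits_X_pow_sub_one {N : ℕ} (hN : (N : F) ≠ 0)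
    (h : (X ^ N - 1 : F[X]).Splits) : ∃ ζ : F, IsPrimitiveRoot ζ N := by
  have : NeZero N := ⟨fun h0 => hN (by simp [h0])⟩
  rw [← card_rootsOfUnity_eq_iff_exists_isPrimitiveRoot,
    Nat.card_congr (rootsOfUnityEquivNthRoots F N)]
  have hnodup : (nthRoots N (1 : F)).Nodup :=
    nodup_roots (separable_X_pow_sub_C 1 hN one_ne_zero)
  have hcard : Multiset.card (nthRoots N (1 : F)) = N := by
    rw [← C_1] at h
    rw [nthRoots, splits_iff_card_roots.mp h, natDegree_X_pow_sub_C]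
  classical
  conv_rhs => rw [← hcard, ← Multiset.toFinset_card_of_nodup hnodup, ← Nat.card_eq_finsetCard]
  simp

lemma exists_isPrimitiveRoot_iff_dvd_card_sub_one [Finite F] {N : ℕ} (hN : N ≠ 0) :
    (∃ ζ : F, IsPrimitiveRoot ζ N) ↔ N ∣ Nat.card F - 1 := by
  rw [← Nat.card_units]
  constructor
  · rintro ⟨ζ, hζ⟩
    obtain ⟨u, rfl⟩ := hζ.isUnit hN
    exact IsPrimitiveRoot.coe_units_iff.mp hζ |>.eq_orderOf ▸ orderOf_dvd_natCard u
  · rintro ⟨t, ht⟩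
    obtain ⟨g, hg⟩ := IsCyclic.exists_ofOrder_eq_natCard (α := Fˣ)
    have ht0 : t ≠ 0 := by rintro rfl; exact Nat.card_pos.ne' ht
    have hprim := (IsPrimitiveRoot.orderOf g).pow_of_dvd ht0 ⟨N, by rw [hg, ht, mul_comm]⟩
    rw [hg, ht, Nat.mul_div_cancel _ (Nat.pos_of_ne_zero ht0)] at hprim
    exact ⟨_, IsPrimitiveRoot.coe_units_iff.mpr hprim⟩

lemma X_pow_mul_expChar_pow_sub_one {p : ℕ} [ExpChar F p] (N n : ℕ) :
    (X ^ (N * p ^ n) - 1 : F[X]) = (X ^ N - 1) ^ p ^ n := by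
  rw [sub_pow_expChar_pow, ← pow_mul, one_pow]

lemma splits_X_pow_sub_one_iff [Finite F] (p : ℕ) [Fact p.Prime] [CharP F p] {M : ℕ}
    (hM : M ≠ 0) :
    (X ^ M - 1 : F[X]).Splits ↔ ∃ N n, N ∣ Nat.card F - 1 ∧ M = N * p ^ n := by
  have hp : p.Prime := Fact.out
  constructor
  · intro h
    obtain ⟨n, N, hpN, rfl⟩ := Nat.exists_eq_pow_mul_and_not_dvd hM p hp.ne_one
    rw [mul_comm, X_pow_mul_expChar_pow_sub_one] at h
    have hN : (N : F) ≠ 0 := by rwa [Ne, CharP.cast_eq_zero_iff F p]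
    have hN0 : N ≠ 0 := right_ne_zero_of_mul hM
    have hne : (X ^ N - 1 : F[X]) ≠ 0 := by simpa using X_pow_sub_C_ne_zero hN0.bot_lt (1 : F)
    have hsplit := h.of_dvd (pow_ne_zero _ hne) (dvd_pow_self _ (pow_ne_zero n hp.ne_zero))
    exact ⟨N, n, (exists_isPrimitiveRoot_iff_dvd_card_sub_one hN0).mp
      (exists_isPrimitiveRoot_of_splits_X_pow_sub_one hN hsplit), mul_comm _ _⟩
  · rintro ⟨N, n, hN, rfl⟩
    obtain ⟨ζ, hζ⟩ :=
      (exists_isPrimitiveRoot_iff_dvd_card_sub_one (left_ne_zero_of_mul hM)).mpr hN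
    rw [X_pow_mul_expChar_pow_sub_one, ← C_1]
    exact (X_pow_sub_one_splits hζ).pow _

theorem stmt8_general (p : ℕ) [Fact p.Prime] (k : ℕ) :
    (sigmaStarStar (X ^ (2 * k + 1) : Polynomial (GaloisField p 2))).Splits ↔
      ∃ N n : ℕ, N ∣ (p ^ 2 - 1) ∧ 2 * k + 1 = N * p ^ n - 1 := by
  rw [sigmaStarStar_X_pow_of_odd (odd_two_mul_add_one k), splits_geom_sum_X_iff,
    splits_X_pow_sub_one_iff p (by omega), GaloisField.card p 2 two_ne_zero]
  refine exists₂_congr fun N n => and_congr_right fun _ => ?_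
  omega

theorem stmt8 (p : ℕ) [Fact p.Prime] (hp : Odd p) (k : ℕ) :
    (sigmaStarStar (X ^ (2 * k + 1) : Polynomial (GaloisField p 2))).Splits ↔
      ∃ N n : ℕ, N ∣ (p ^ 2 - 1) ∧ 2 * k + 1 = N * p ^ n - 1 :=
  stmt8_general p k
end

section
/- Let A = x^a(x+1)^b(x+α)^c(x+α+1)^d ∈ F_4[x] be bi-unitary perfect. If a is even and b is odd, then a ∈ {2,4,6} and b ≤ 11; symmetrically, if a is odd and b is even then a ≤ 11 and b ∈ {2,4,6}; if c is even and d is odd then c ∈ {2,4,6} and d ≤ 11; if c is odd and d is even then c ≤ 11 and d ∈ {2,4,6}. -/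
open Polynomial

variable {F : Type*} [Field F]

/-- The field with four elements. -/
abbrev F4 := GaloisField 2 2

/-!
Write `S = ∏ γ, (X - γ) ^ e γ`. A bi-unitary divisor of `S` takes from each `(X - γ) ^ n` an
exponent `0 ≤ i ≤ n` other than `i = n / 2` for even `n > 0`, so `σ**(S) = S` makes every
`σ**((X - γ) ^ e γ)` divide `S`, hence split. In characteristic 2, with `P = X - γ`, this factor
times `P - 1` is `P ^ (n + 1) - 1` for odd `n` and `(P ^ m - 1) * (P ^ (m + 1) - 1)` for `n = 2m`.
If `(X - γ) ^ k - 1` splits with `k` odd, its `k` distinct roots give `k` distinct `k`-th roots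
of unity, so `k ∣ |F| - 1 = 3`.

For `e (u + 1) + 1 = 2 ^ s * t` with `t` odd, the factor at `u + 1` times `X - u` is
`((X - u - 1) ^ t - 1) ^ (2 ^ s)`, which is divisible by `(X - u) ^ (2 ^ s)`: hence `t ∣ 3` and
`2 ^ s - 1 ≤ e u`. For `e u = 2m`, whichever of `m`, `m + 1` is odd divides 3, so `m ≤ 3`; then
`2 ^ s ≤ 4` and `e (u + 1) + 1 ≤ 12`.
-/

def biunitaryExponents (n : ℕ) : Finset ℕ :=
  (Finset.range (n + 1)).filter fun i => 2 * i = n → i = 0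

@[simp]
theorem mem_biunitaryExponents {n i : ℕ} :
    i ∈ biunitaryExponents n ↔ i ≤ n ∧ (2 * i = n → i = 0) := by
  simp [biunitaryExponents]

theorem biunitaryExponents_of_odd {n : ℕ} (hn : Odd n) :
    biunitaryExponents n = Finset.range (n + 1) := by
  obtain ⟨k, rfl⟩ := hn
  ext i
  simp only [mem_biunitaryExponents, Finset.mem_range]
  omega

theorem biunitaryExponents_two_mul {m : ℕ} (hm : m ≠ 0) :
    biunitaryExponents (2 * m) = (Finset.range (2 * m + 1)).erase m := by
  ext i
  simp only [mem_biunitaryExponents, Finset.mem_erase, Finset.mem_range]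
  omega

section CommRing

variable {R : Type*} [CommRing R]

theorem sum_biunitaryExponents_mul_sub_one_of_odd (x : R) {n : ℕ} (hn : Odd n) :
    (∑ i ∈ biunitaryExponents n, x ^ i) * (x - 1) = x ^ (n + 1) - 1 := by
  rw [biunitaryExponents_of_odd hn, geom_sum_mul]

variable [CharP R 2]

theorem sum_biunitaryExponents_two_mul_mul_sub_one (x : R) {m : ℕ} (hm : m ≠ 0) :
    (∑ i ∈ biunitaryExponents (2 * m), x ^ i) * (x - 1) = (x ^ m - 1) * (x ^ (m + 1) - 1) := by
  have hmem : m ∈ Finset.range (2 * m + 1) := Finset.mem_range.mpr (by omega)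
  have hsum := Finset.add_sum_erase _ (fun i => x ^ i) hmem
  rw [biunitaryExponents_two_mul hm]
  linear_combination (x - 1) * hsum + geom_sum_mul x (2 * m + 1) +
    (x ^ m - 1) * (CharTwo.two_eq_zero : (2 : R) = 0)

theorem pow_two_pow_mul_sub_one (x : R) (s t : ℕ) :
    x ^ (2 ^ s * t) - 1 = (x ^ t - 1) ^ 2 ^ s := by
  rw [sub_pow_char_pow, one_pow, ← pow_mul, mul_comm t]

end CommRing

theorem dvd_natCard_sub_one_of_splits_X_pow_sub_one [Finite F] {n : ℕ} (hn : (n : F) ≠ 0)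
    (h : (X ^ n - 1 : F[X]).Splits) : n ∣ Nat.card F - 1 := by
  classical
  have : NeZero n := ⟨by rintro rfl; simp at hn⟩
  have hroots : nthRoots n (1 : F) = (X ^ n - 1 : F[X]).roots := by simp [nthRoots]
  have hnodup : (nthRoots n (1 : F)).Nodup := by
    simpa [nthRoots] using nodup_roots (separable_X_pow_sub_C (1 : F) hn one_ne_zero)
  have hcard : Nat.card (rootsOfUnity n F) = n := by
    rw [Nat.card_congr ((rootsOfUnityEquivNthRoots F n).trans
      (Equiv.subtypeEquivRight fun x => Multiset.mem_toFinset.symm)),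
      Nat.card_eq_finsetCard, Multiset.toFinset_card_of_nodup hnodup, hroots,
      splits_iff_card_roots.mp h, ← C_1, natDegree_X_pow_sub_C]
  rw [← Nat.card_units, ← hcard]
  exact Subgroup.card_subgroup_dvd_card _

theorem dvd_natCard_sub_one_of_splits_X_sub_C_pow_sub_one [Finite F] {n : ℕ} (hn : (n : F) ≠ 0)
    {γ : F} (h : ((X - C γ) ^ n - 1 : F[X]).Splits) : n ∣ Nat.card F - 1 := by
  refine dvd_natCard_sub_one_of_splits_X_pow_sub_one hn ?_
  simpa using h.comp_X_sub_C (-γ)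

theorem X_sub_C_add_one (γ : F) : X - C (γ + 1) = X - C γ - 1 := by
  rw [map_add, map_one, sub_add_eq_sub_sub]

theorem X_sub_C_pow_sub_one_ne_zero (γ : F) {n : ℕ} (hn : n ≠ 0) :
    (X - C γ) ^ n - 1 ≠ 0 := by
  intro h
  simpa [hn] using congrArg (eval γ) h

theorem Odd.dvd_natCard_sub_one_of_splits [Finite F] [CharP F 2] {n : ℕ} (hn : Odd n) {γ : F}
    (h : ((X - C γ) ^ n - 1 : F[X]).Splits) : n ∣ Nat.card F - 1 :=
  dvd_natCard_sub_one_of_splits_X_sub_C_pow_sub_one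
    (by rw [Ne, CharP.cast_eq_zero_iff F 2]; exact hn.not_two_dvd_nat) h

section ProdXSubCPow

variable [Fintype F]

noncomputable def prodXSubCPow (e : F → ℕ) : F[X] := ∏ γ, (X - C γ) ^ e γ

theorem prodXSubCPow_monic (e : F → ℕ) : (prodXSubCPow e).Monic :=
  monic_prod_of_monic _ _ fun γ _ => (monic_X_sub_C γ).pow _

theorem prodXSubCPow_ne_zero (e : F → ℕ) : prodXSubCPow e ≠ 0 :=
  (prodXSubCPow_monic e).ne_zero

theorem prodXSubCPow_splits (e : F → ℕ) : (prodXSubCPow e).Splits :=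
  Splits.prod fun γ _ => (Splits.X_sub_C γ).pow _

theorem prodXSubCPow_zero : prodXSubCPow (0 : F → ℕ) = 1 := by simp [prodXSubCPow]

theorem prodXSubCPow_add (e f : F → ℕ) :
    prodXSubCPow (e + f) = prodXSubCPow e * prodXSubCPow f := by
  simp only [prodXSubCPow, Pi.add_apply, pow_add, Finset.prod_mul_distrib]

theorem rootMultiplicity_prodXSubCPow (e : F → ℕ) (γ : F) :
    rootMultiplicity γ (prodXSubCPow e) = e γ := by
  classical
  rw [← count_roots, prodXSubCPow, roots_prod _ _ (prodXSubCPow_ne_zero e)]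
  simp [Multiset.count_bind, Multiset.count_singleton]

theorem prodXSubCPow_injective : Function.Injective (prodXSubCPow (F := F)) :=
  fun e f h => funext fun γ => by
    rw [← rootMultiplicity_prodXSubCPow e γ, h, rootMultiplicity_prodXSubCPow]

theorem prodXSubCPow_rootMultiplicity {D : F[X]} (hm : D.Monic) (hs : D.Splits) :
    prodXSubCPow (fun γ => rootMultiplicity γ D) = D := by
  classical
  rw [(prodXSubCPow_splits _).eq_prod_roots_of_monic (prodXSubCPow_monic _)]
  conv_rhs => rw [hs.eq_prod_roots_of_monic hm]
  congr 2
  ext γ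
  rw [count_roots, count_roots, rootMultiplicity_prodXSubCPow]

theorem prodXSubCPow_dvd_prodXSubCPow {e f : F → ℕ} (h : f ≤ e) :
    prodXSubCPow f ∣ prodXSubCPow e :=
  Finset.prod_dvd_prod_of_dvd _ _ fun γ _ => pow_dvd_pow _ (h γ)

theorem monic_dvd_prodXSubCPow_iff {e : F → ℕ} {D : F[X]} :
    D.Monic ∧ D ∣ prodXSubCPow e ↔ ∃ f ≤ e, D = prodXSubCPow f := by
  constructor
  · rintro ⟨hm, hd⟩
    refine ⟨fun γ => rootMultiplicity γ D, fun γ => ?_, ?_⟩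
    · rw [← rootMultiplicity_prodXSubCPow e γ]
      exact rootMultiplicity_le_rootMultiplicity_of_dvd (prodXSubCPow_ne_zero e) hd γ
    · exact (prodXSubCPow_rootMultiplicity hm
        ((prodXSubCPow_splits e).of_dvd (prodXSubCPow_ne_zero e) hd)).symm
  · rintro ⟨f, hf, rfl⟩
    exact ⟨prodXSubCPow_monic f, prodXSubCPow_dvd_prodXSubCPow hf⟩

theorem prodXSubCPow_div {e f : F → ℕ} (h : f ≤ e) :
    prodXSubCPow e / prodXSubCPow f = prodXSubCPow (e - f) := by
  rw [← tsub_add_cancel_of_le h, add_tsub_cancel_right, prodXSubCPow_add,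
    mul_div_cancel_right₀ _ (prodXSubCPow_ne_zero f)]

theorem isCoprime_prodXSubCPow {e f : F → ℕ} (h : ∀ γ, e γ = 0 ∨ f γ = 0) :
    IsCoprime (prodXSubCPow e) (prodXSubCPow f) := by
  refine IsCoprime.prod_left fun γ _ => IsCoprime.prod_right fun δ _ => ?_
  obtain rfl | hne := eq_or_ne γ δ
  · rcases h γ with h0 | h0 <;> simp [h0, isCoprime_one_left, isCoprime_one_right]
  · exact (isCoprime_X_sub_C_of_isUnit_sub (sub_ne_zero.mpr hne).isUnit).pow

theorem X_sub_C_dvd_prodXSubCPow {f : F → ℕ} {γ : F} (h : f γ ≠ 0) :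
    X - C γ ∣ prodXSubCPow f :=
  (dvd_pow_self _ h).trans (Finset.dvd_prod_of_mem _ (Finset.mem_univ γ))

theorem isUnitaryDivisor_prodXSubCPow_iff {e : F → ℕ} {G : F[X]} :
    IsUnitaryDivisor G (prodXSubCPow e) ↔
      ∃ g : F → ℕ, (∀ γ, g γ = 0 ∨ g γ = e γ) ∧ G = prodXSubCPow g := by
  constructor
  · rintro ⟨hm, hd, hcop⟩
    obtain ⟨g, hge, rfl⟩ := monic_dvd_prodXSubCPow_iff.mp ⟨hm, hd⟩
    rw [prodXSubCPow_div hge] at hcop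
    refine ⟨g, fun γ => ?_, rfl⟩
    by_contra! hγ
    have hsub : (e - g) γ ≠ 0 := by
      have : g γ ≤ e γ := hge γ
      simp only [Pi.sub_apply]
      omega
    exact not_isUnit_X_sub_C γ (hcop.isUnit_of_dvd' (X_sub_C_dvd_prodXSubCPow hγ.1)
      (X_sub_C_dvd_prodXSubCPow hsub))
  · rintro ⟨g, hg, rfl⟩
    have hge : ∀ γ, g γ ≤ e γ := fun γ => by rcases hg γ with h | h <;> omega
    refine ⟨prodXSubCPow_monic g, prodXSubCPow_dvd_prodXSubCPow hge, ?_⟩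
    rw [prodXSubCPow_div hge]
    refine isCoprime_prodXSubCPow fun γ => ?_
    have := hge γ
    rcases hg γ with h | h <;> simp only [Pi.sub_apply] <;> omega

theorem isBiunitaryDivisor_prodXSubCPow_iff {e : F → ℕ} {D : F[X]} :
    IsBiunitaryDivisor D (prodXSubCPow e) ↔
      ∃ f : F → ℕ, (∀ γ, f γ ∈ biunitaryExponents (e γ)) ∧ D = prodXSubCPow f := by
  classical
  simp only [mem_biunitaryExponents, forall_and]
  constructor
  · rintro ⟨hm, hd, hbi⟩
    obtain ⟨f, hfe, rfl⟩ := monic_dvd_prodXSubCPow_iff.mp ⟨hm, hd⟩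
    rw [prodXSubCPow_div hfe] at hbi
    refine ⟨f, ⟨hfe, fun γ hγ => ?_⟩, rfl⟩
    have hg := hbi (prodXSubCPow (Pi.single γ (f γ)))
      (isUnitaryDivisor_prodXSubCPow_iff.mpr ⟨_, fun δ => ?_, rfl⟩)
      (isUnitaryDivisor_prodXSubCPow_iff.mpr ⟨_, fun δ => ?_, rfl⟩)
    · rw [← prodXSubCPow_zero] at hg
      simpa using congrFun (prodXSubCPow_injective hg) γ
    all_goals
      obtain rfl | hδ := eq_or_ne δ γ
      · simp only [Pi.single_eq_same, Pi.sub_apply, or_true] <;> omega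
      · simp [hδ]
  · rintro ⟨f, ⟨hfe, hf⟩, rfl⟩
    refine ⟨prodXSubCPow_monic f, prodXSubCPow_dvd_prodXSubCPow hfe, fun G hG hG' => ?_⟩
    rw [prodXSubCPow_div hfe] at hG'
    obtain ⟨g, hg, rfl⟩ := isUnitaryDivisor_prodXSubCPow_iff.mp hG
    obtain ⟨g', hg', hgg'⟩ := isUnitaryDivisor_prodXSubCPow_iff.mp hG'
    obtain rfl := prodXSubCPow_injective hgg'
    suffices g = 0 by rw [this, prodXSubCPow_zero]
    funext γ
    have := hf γ
    have : f γ ≤ e γ := hfe γ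
    rcases hg γ with h | h <;> rcases hg' γ with h' | h' <;>
      simp only [Pi.sub_apply, Pi.zero_apply] at * <;> omega

theorem sigmaStarStar_prodXSubCPow (e : F → ℕ) :
    sigmaStarStar (prodXSubCPow e) =
      ∏ γ, ∑ i ∈ biunitaryExponents (e γ), (X - C γ) ^ i := by
  classical
  have hset : {D | IsBiunitaryDivisor D (prodXSubCPow e)} =
      (Fintype.piFinset fun γ => biunitaryExponents (e γ)).image prodXSubCPow := by
    ext D
    simp [isBiunitaryDivisor_prodXSubCPow_iff, eq_comm]
  rw [sigmaStarStar, hset, finsum_mem_coe_finset,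
    Finset.sum_image prodXSubCPow_injective.injOn, Finset.prod_univ_sum]
  rfl

theorem prodXSubCPow_single [DecidableEq F] (γ : F) (n : ℕ) :
    prodXSubCPow (Pi.single γ n) = (X - C γ) ^ n := by
  rw [prodXSubCPow, Finset.prod_eq_single γ
    (fun δ _ hδ => by rw [Pi.single_eq_of_ne hδ, pow_zero]) (by simp), Pi.single_eq_same]

end ProdXSubCPow

namespace IsBUP

variable [Fintype F] {e : F → ℕ}

theorem sum_biunitaryExponents_dvd (h : IsBUP (prodXSubCPow e)) (γ : F) :
    ∑ i ∈ biunitaryExponents (e γ), (X - C γ) ^ i ∣ prodXSubCPow e := by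
  calc _ ∣ sigmaStarStar (prodXSubCPow e) := by
        rw [sigmaStarStar_prodXSubCPow]; exact Finset.dvd_prod_of_mem _ (Finset.mem_univ γ)
    _ = prodXSubCPow e := h

theorem splits_sum_biunitaryExponents_mul (h : IsBUP (prodXSubCPow e)) (γ δ : F) :
    ((∑ i ∈ biunitaryExponents (e γ), (X - C γ) ^ i) * (X - C δ)).Splits :=
  ((prodXSubCPow_splits e).mul (Splits.X_sub_C δ)).of_dvd
    (mul_ne_zero (prodXSubCPow_ne_zero e) (X_sub_C_ne_zero δ))
    (mul_dvd_mul_right (h.sum_biunitaryExponents_dvd γ) _)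

variable [CharP F 2]

theorem splits_of_eq_two_mul (h : IsBUP (prodXSubCPow e)) {u : F} {m : ℕ} (hm : m ≠ 0)
    (hu : e u = 2 * m) : (((X - C u) ^ m - 1) * ((X - C u) ^ (m + 1) - 1)).Splits := by
  have := h.splits_sum_biunitaryExponents_mul u (u + 1)
  rwa [X_sub_C_add_one, hu, sum_biunitaryExponents_two_mul_mul_sub_one _ hm] at this

theorem dvd_natCard_sub_one_and_le_of_odd (h : IsBUP (prodXSubCPow e)) {v : F} {s t : ℕ}
    (hv : Odd (e v)) (hst : e v + 1 = 2 ^ s * t) (ht : Odd t) :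
    t ∣ Nat.card F - 1 ∧ 2 ^ s - 1 ≤ e (v + 1) := by
  set S := ∑ i ∈ biunitaryExponents (e v), (X - C v) ^ i
  have hS : S * (X - C (v + 1)) = ((X - C v) ^ t - 1) ^ 2 ^ s := by
    rw [X_sub_C_add_one, sum_biunitaryExponents_mul_sub_one_of_odd _ hv, hst,
      pow_two_pow_mul_sub_one]
  have hne : (X - C v) ^ t - 1 ≠ 0 := X_sub_C_pow_sub_one_ne_zero v ht.pos.ne'
  constructor
  · refine ht.dvd_natCard_sub_one_of_splits (γ := v) <|
      (h.splits_sum_biunitaryExponents_mul v (v + 1)).of_dvd (hS ▸ pow_ne_zero _ hne) ?_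
    rw [hS]
    exact dvd_pow_self _ (pow_ne_zero _ two_ne_zero)
  · have hdvd : X - C (v + 1) ∣ (X - C v) ^ t - 1 := by
      have := sub_dvd_pow_sub_pow (X - C v) 1 t
      rwa [one_pow, ← X_sub_C_add_one] at this
    have : (X - C (v + 1)) ^ (2 ^ s - 1) * (X - C (v + 1)) ∣ S * (X - C (v + 1)) := by
      rw [pow_sub_one_mul (pow_ne_zero _ two_ne_zero), hS]
      exact pow_dvd_pow_of_dvd hdvd _
    rw [← rootMultiplicity_prodXSubCPow e (v + 1),
      le_rootMultiplicity_iff (prodXSubCPow_ne_zero e)]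
    exact ((mul_dvd_mul_iff_right (X_sub_C_ne_zero _)).mp this).trans
      (h.sum_biunitaryExponents_dvd v)

theorem mem_and_le_of_even_of_odd (hF : Nat.card F = 4) (h : IsBUP (prodXSubCPow e)) {u : F}
    (hu : Even (e u)) (hu1 : Odd (e (u + 1))) :
    e u ∈ ({2, 4, 6} : Set ℕ) ∧ e (u + 1) ≤ 11 := by
  obtain ⟨s, t, ht, hst⟩ := Nat.exists_eq_two_pow_mul_odd (n := e (u + 1) + 1) (by omega)
  obtain ⟨ht3, hs⟩ := h.dvd_natCard_sub_one_and_le_of_odd hu1 hst ht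
  rw [hF] at ht3
  rw [add_assoc, CharTwo.add_self_eq_zero, add_zero] at hs
  have hs0 : s ≠ 0 := by
    rintro rfl
    rw [pow_zero, one_mul] at hst
    exact Nat.odd_add_one.mp (hst ▸ ht) hu1
  obtain ⟨m, hm⟩ := hu
  have hm0 : m ≠ 0 := by
    have := Nat.one_lt_two_pow hs0
    omega
  have hsplit := h.splits_of_eq_two_mul (u := u) hm0 (by omega)
  have hodd_le : ∀ k, k = m ∨ k = m + 1 → Odd k → k ≤ 3 := by
    rintro k hkm hk
    suffices k ∣ Nat.card F - 1 by rw [hF] at this; exact Nat.le_of_dvd three_pos this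
    refine hk.dvd_natCard_sub_one_of_splits (γ := u) <| hsplit.of_dvd
      (mul_ne_zero (X_sub_C_pow_sub_one_ne_zero u hm0)
        (X_sub_C_pow_sub_one_ne_zero u m.succ_ne_zero)) ?_
    rcases hkm with rfl | rfl
    · exact dvd_mul_right _ _
    · exact dvd_mul_left _ _
  have hm3 : m ≤ 3 := by
    rcases Nat.even_or_odd m with hm' | hm'
    · have := hodd_le (m + 1) (Or.inr rfl) hm'.add_one
      omega
    · exact hodd_le m (Or.inl rfl) hm'
  have hs2 : 2 ^ s ≤ 2 ^ 2 := by
    refine Nat.pow_le_pow_right two_pos ?_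
    by_contra! hs3
    have : 2 ^ 3 ≤ 2 ^ s := Nat.pow_le_pow_right two_pos hs3
    omega
  refine ⟨?_, ?_⟩
  · obtain ⟨hm1, -⟩ : 1 ≤ m ∧ m ≤ 3 := ⟨by omega, hm3⟩
    interval_cases m <;> simp [hm]
  · have := Nat.mul_le_mul hs2 (Nat.le_of_dvd three_pos ht3)
    omega

end IsBUP

theorem stmt14 (α : F4) (hα : α ^ 2 + α + 1 = 0) (a b c d : ℕ)
    (hbup : IsBUP (X ^ a * (X + 1) ^ b * (X + C α) ^ c * (X + C α + 1) ^ d :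
      Polynomial F4)) :
    (Even a → Odd b → a ∈ ({2, 4, 6} : Set ℕ) ∧ b ≤ 11) ∧
    (Odd a → Even b → a ≤ 11 ∧ b ∈ ({2, 4, 6} : Set ℕ)) ∧
    (Even c → Odd d → c ∈ ({2, 4, 6} : Set ℕ) ∧ d ≤ 11) ∧
    (Odd c → Even d → c ≤ 11 ∧ d ∈ ({2, 4, 6} : Set ℕ)) := by
  classical
  have : Fintype F4 := Fintype.ofFinite F4
  have h11 : (1 : F4) + 1 = 0 := CharTwo.add_self_eq_zero 1
  have hα0 : α ≠ 0 := by rintro rfl; simp at hα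
  have hα1 : α ≠ 1 := by rintro rfl; simp [h11] at hα
  have hα10 : α + 1 ≠ 0 := fun h => hα1 (by linear_combination h - h11)
  set e : F4 → ℕ := Pi.single 0 a + Pi.single 1 b + Pi.single α c + Pi.single (α + 1) d
  have he : e 0 = a ∧ e 1 = b ∧ e α = c ∧ e (α + 1) = d := by
    simp [e, hα0, hα1, hα10, hα0.symm, hα1.symm, hα10.symm]
  have hS : X ^ a * (X + 1) ^ b * (X + C α) ^ c * (X + C α + 1) ^ d = prodXSubCPow e := by
    simp only [e, prodXSubCPow_add, prodXSubCPow_single, map_zero, map_add, map_one,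
      CharTwo.sub_eq_add, add_zero, add_assoc, mul_assoc]
  rw [hS] at hbup
  have hcard : Nat.card F4 = 4 := by rw [GaloisField.card 2 2 two_ne_zero]; norm_num
  have key (u : F4) := hbup.mem_and_le_of_even_of_odd hcard (u := u)
  have hα11 : α + 1 + 1 = α := by rw [add_assoc, h11, add_zero]
  refine ⟨fun h1 h2 => ?_, fun h1 h2 => ?_, fun h1 h2 => ?_, fun h1 h2 => ?_⟩
  · simpa [he] using key 0 (by simpa [he]) (by simpa [he])
  · simpa [h11, he] using (key 1 (by simpa [he]) (by simpa [h11, he])).symm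
  · simpa [he] using key α (by simpa [he]) (by simpa [he])
  · simpa [hα11, he] using (key (α + 1) (by simpa [he]) (by simpa [hα11, he])).symm
end
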